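/- Let G = (V, E) be a finite simple graph with |V| = n, let k ∈ ℕ, let m ≥ n be an integer such that n + m is even, and let G′ be the graph on vertex set V ∪ U, where U is a set of m new vertices, in which two distinct vertices x, y are adjacent if and only if either (x, y ∈ V and {x, y} ∉ E) or at least one of x, y belongs to U. Then G has a partition (A, B) of V with at least k edges of G between A and B, if and only if G′ has a partition (A′, B′) of V ∪ U with |A′| = |B′| = (n + m)/2 and at most ((n + m)/2)² − k edges of G′ between A′ and B′. -/
import Mathlib


/-- The set of edges of `H` between `A` and its complement. -/
def cutEdges {W : Type} (H : SimpleGraph W) (A : Set W) : Set (Sym2 W) :=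
  {e | e ∈ H.edgeSet ∧ ∃ a ∈ A, ∃ b ∈ Aᶜ, e = s(a, b)}

/-- The graph `G'` of the bisection reduction: on vertex set `V ⊕ Fin m`, two
distinct vertices are adjacent iff they are both original vertices that are
non-adjacent in `G`, or at least one of them is a new vertex. -/
def bisectionGraph {V : Type} (G : SimpleGraph V) (m : ℕ) : SimpleGraph (V ⊕ Fin m) :=
  SimpleGraph.fromRel (fun x y =>
    match x, y with
    | Sum.inl a, Sum.inl b => ¬ G.Adj a b
    | _, _ => True)

lemma mem_cutEdges {W : Type} (H : SimpleGraph W) (A : Set W) (e : Sym2 W) :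
    e ∈ cutEdges H A ↔ ∃ a ∈ A, ∃ b ∈ Aᶜ, H.Adj a b ∧ e = s(a, b) := by
  constructor
  · rintro ⟨he, a, ha, b, hb, rfl⟩
    exact ⟨a, ha, b, hb, he, rfl⟩
  · rintro ⟨a, ha, b, hb, hadj, rfl⟩
    exact ⟨hadj, a, ha, b, hb, rfl⟩

lemma bisection_adj {V : Type} (G : SimpleGraph V) (m : ℕ) (x y : V ⊕ Fin m) :
    (bisectionGraph G m).Adj x y ↔ x ≠ y ∧
      (∀ a b, x = Sum.inl a → y = Sum.inl b → ¬ G.Adj a b) := by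
  unfold bisectionGraph
  rw [SimpleGraph.fromRel_adj]
  constructor
  · rintro ⟨hne, h | h⟩ <;> refine ⟨hne, ?_⟩ <;>
    · rintro a b rfl rfl hadj
      simp only at h
      exact h (by first | exact hadj | exact hadj.symm)
  · rintro ⟨hne, h⟩
    refine ⟨hne, Or.inl ?_⟩
    match x, y with
    | Sum.inl a, Sum.inl b => exact h a b rfl rfl
    | Sum.inl a, Sum.inr b => trivial
    | Sum.inr a, _ => trivial

/-- The set of all cross pairs -/
def crossSet {W : Type} (A : Set W) : Set (Sym2 W) :=
  {e | ∃ a ∈ A, ∃ b ∈ Aᶜ, e = s(a, b)}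

lemma crossSet_ncard {W : Type} [Fintype W] (A : Set W) :
    (crossSet A).ncard = A.ncard * Aᶜ.ncard := by
  have himg : crossSet A = (fun p : W × W => s(p.1, p.2)) '' (A ×ˢ Aᶜ) := by
    ext e
    constructor
    · rintro ⟨a, ha, b, hb, rfl⟩; exact ⟨(a, b), ⟨ha, hb⟩, rfl⟩
    · rintro ⟨⟨a, b⟩, ⟨ha, hb⟩, rfl⟩; exact ⟨a, ha, b, hb, rfl⟩
  have hinj : Set.InjOn (fun p : W × W => s(p.1, p.2)) (A ×ˢ Aᶜ) := by
    rintro ⟨a, b⟩ ⟨ha, hb⟩ ⟨c, d⟩ ⟨hc, hd⟩ h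
    simp only [Sym2.eq_iff] at h
    rcases h with ⟨rfl, rfl⟩ | ⟨rfl, rfl⟩
    · rfl
    · exact absurd hc hb
  rw [himg, Set.ncard_image_of_injOn hinj]
  show Nat.card _ = _
  rw [Nat.card_congr (Equiv.Set.prod A Aᶜ), Nat.card_prod]
  rfl

/-- The cut edges of G inside the bisection graph's vertex set -/
lemma cut_split {V : Type} [Fintype V] (G : SimpleGraph V) (m : ℕ)
    (A' : Set (V ⊕ Fin m)) :
    (cutEdges (bisectionGraph G m) A').ncard
      + (cutEdges G (Sum.inl ⁻¹' A')).ncard = A'.ncard * A'ᶜ.ncard := by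
  set S : Set (Sym2 (V ⊕ Fin m)) :=
    Sym2.map (Sum.inl : V → V ⊕ Fin m) '' cutEdges G (Sum.inl ⁻¹' A') with hS
  have hScard : S.ncard = (cutEdges G (Sum.inl ⁻¹' A')).ncard :=
    Set.ncard_image_of_injective _ (Sym2.map.injective Sum.inl_injective)
  have hmemS : ∀ e, e ∈ S ↔ ∃ a b, G.Adj a b ∧ Sum.inl a ∈ A' ∧ Sum.inl b ∈ A'ᶜ
      ∧ e = s(Sum.inl a, Sum.inl b) := by
    intro e
    constructor
    · rintro ⟨f, hf, rfl⟩
      rw [mem_cutEdges] at hf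
      obtain ⟨a, ha, b, hb, hadj, rfl⟩ := hf
      exact ⟨a, b, hadj, ha, hb, rfl⟩
    · rintro ⟨a, b, hadj, ha, hb, rfl⟩
      exact ⟨s(a, b), (mem_cutEdges _ _ _).2 ⟨a, ha, b, hb, hadj, rfl⟩, rfl⟩
  have hunion : cutEdges (bisectionGraph G m) A' ∪ S = crossSet A' := by
    ext e
    constructor
    · rintro (he | he)
      · obtain ⟨_, a, ha, b, hb, rfl⟩ := he
        exact ⟨a, ha, b, hb, rfl⟩
      · rw [hmemS] at he
        obtain ⟨a, b, _, ha, hb, rfl⟩ := he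
        exact ⟨_, ha, _, hb, rfl⟩
    · rintro ⟨a, ha, b, hb, rfl⟩
      have hne : a ≠ b := by rintro rfl; exact hb ha
      by_cases h : ∃ a' b', a = Sum.inl a' ∧ b = Sum.inl b' ∧ G.Adj a' b'
      · obtain ⟨a', b', rfl, rfl, hadj⟩ := h
        exact Or.inr ((hmemS _).2 ⟨a', b', hadj, ha, hb, rfl⟩)
      · push_neg at h
        refine Or.inl ((mem_cutEdges _ _ _).2 ⟨a, ha, b, hb, ?_, rfl⟩)
        rw [bisection_adj]
        exact ⟨hne, h⟩
  have hdisj : Disjoint (cutEdges (bisectionGraph G m) A') S := by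
    rw [Set.disjoint_left]
    rintro e he heS
    rw [hmemS] at heS
    obtain ⟨a, b, hadj, _, _, rfl⟩ := heS
    have := he.1
    rw [SimpleGraph.mem_edgeSet, bisection_adj] at this
    exact this.2 a b rfl rfl hadj
  rw [← crossSet_ncard, ← hunion, Set.ncard_union_eq hdisj (Set.toFinite _) (Set.toFinite _),
    hScard]

theorem stmt_10 {V : Type} [Fintype V] (G : SimpleGraph V) (n m k : ℕ)
    (hn : Fintype.card V = n) (hm : n ≤ m) (heven : Even (n + m)) :
    (∃ A : Set V, k ≤ (cutEdges G A).ncard) ↔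
      (∃ A' : Set (V ⊕ Fin m),
        A'.ncard = (n + m) / 2 ∧ A'ᶜ.ncard = (n + m) / 2 ∧
        ((cutEdges (bisectionGraph G m) A').ncard : ℤ) ≤ (((n + m) / 2 : ℕ) : ℤ) ^ 2 - (k : ℤ)) := by
  set s := (n + m) / 2 with hs
  have h2s : 2 * s = n + m := Nat.two_mul_div_two_of_even heven
  have hcardsum : Nat.card (V ⊕ Fin m) = n + m := by
    simp [Nat.card_eq_fintype_card, hn]
  constructor
  · rintro ⟨A, hA⟩
    have hAn : A.ncard ≤ n := by
      have := Set.ncard_le_ncard (Set.subset_univ A) (Set.toFinite _)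
      rwa [Set.ncard_univ, Nat.card_eq_fintype_card, hn] at this
    have hns : n ≤ s := by omega
    have hsm : s ≤ m := by omega
    obtain ⟨T, -, hT⟩ := Finset.exists_subset_card_eq
      (show s - A.ncard ≤ (Finset.univ : Finset (Fin m)).card by
        simp only [Finset.card_univ, Fintype.card_fin]; omega)
    set A' : Set (V ⊕ Fin m) := Sum.inl '' A ∪ Sum.inr '' ↑T with hA'
    have hpre : Sum.inl ⁻¹' A' = A := by
      ext v
      simp [hA', Set.preimage_image_eq _ Sum.inl_injective]
    have hcardA' : A'.ncard = s := by
      rw [hA', Set.ncard_union_eq (by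
        rw [Set.disjoint_left]; rintro x ⟨a, -, rfl⟩ ⟨b, -, h⟩; exact Sum.inl_ne_inr h.symm)
        (Set.toFinite _) (Set.toFinite _),
        Set.ncard_image_of_injective _ Sum.inl_injective,
        Set.ncard_image_of_injective _ Sum.inr_injective,
        Set.ncard_coe_finset, hT]
      omega
    have hcardA'c : A'ᶜ.ncard = s := by
      have := Set.ncard_add_ncard_compl A'
      rw [hcardsum, hcardA'] at this
      omega
    refine ⟨A', hcardA', hcardA'c, ?_⟩
    have hsplit := cut_split G m A'
    rw [hpre, hcardA', hcardA'c] at hsplit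
    have : k ≤ (cutEdges G A).ncard := hA
    nlinarith [hsplit, this]
  · rintro ⟨A', h1, h2, h3⟩
    refine ⟨Sum.inl ⁻¹' A', ?_⟩
    have hsplit := cut_split G m A'
    rw [h1, h2] at hsplit
    have h4 : ((cutEdges (bisectionGraph G m) A').ncard : ℤ)
        + ((cutEdges G (Sum.inl ⁻¹' A')).ncard : ℤ) = (s : ℤ) * s := by exact_mod_cast hsplit
    have : (k : ℤ) ≤ ((cutEdges G (Sum.inl ⁻¹' A')).ncard : ℤ) := by nlinarith [h3, h4]
    exact_mod_cast this
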